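/- The signatures of naive, stable and stage semantics admit the following characterizations: Σ_naive = {𝕊 an extension-set | 𝕊 ≠ ∅ and 𝕊 = 𝕊⁺}; Σ_stb = {𝕊 an extension-set | 𝕊 ⊆ 𝕊⁺}; Σ_stage = {𝕊 an extension-set | 𝕊 ≠ ∅ and 𝕊 ⊆ 𝕊⁺}. -/

import Mathlib

structure AF where
  A : Finset ℕ
  R : Set (ℕ × ℕ)
  R_sub : ∀ p ∈ R, p.1 ∈ A ∧ p.2 ∈ A

namespace AF

def cf (F : AF) : Set (Set ℕ) :=
  {S | S ⊆ ↑F.A ∧ ∀ a ∈ S, ∀ b ∈ S, (a, b) ∉ F.R}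

def defends (F : AF) (S : Set ℕ) (a : ℕ) : Prop :=
  ∀ b, (b, a) ∈ F.R → ∃ s ∈ S, (s, b) ∈ F.R

def adm (F : AF) : Set (Set ℕ) :=
  {S | S ∈ F.cf ∧ ∀ a ∈ S, F.defends S a}

def rng (F : AF) (S : Set ℕ) : Set ℕ :=
  S ∪ {b | ∃ s ∈ S, (s, b) ∈ F.R}

def naive (F : AF) : Set (Set ℕ) :=
  {S | S ∈ F.cf ∧ ∀ T ∈ F.cf, S ⊆ T → S = T}

def stb (F : AF) : Set (Set ℕ) :=
  {S | S ∈ F.cf ∧ ∀ a ∈ F.A, a ∉ S → ∃ s ∈ S, (s, a) ∈ F.R}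

def pref (F : AF) : Set (Set ℕ) :=
  {S | S ∈ F.adm ∧ ∀ T ∈ F.adm, S ⊆ T → S = T}

def stage (F : AF) : Set (Set ℕ) :=
  {S | S ∈ F.cf ∧ ¬ ∃ T ∈ F.cf, F.rng S ⊂ F.rng T}

def sem (F : AF) : Set (Set ℕ) :=
  {S | S ∈ F.adm ∧ ¬ ∃ T ∈ F.adm, F.rng S ⊂ F.rng T}

end AF

abbrev Semantics := AF → Set (Set ℕ)

def StandardSemantics : Set Semantics :=
  {AF.naive, AF.stb, AF.stage, AF.pref, AF.sem}

def AFCompact (σ : Semantics) (F : AF) : Prop :=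
  ∀ a ∈ F.A, ∃ S ∈ σ F, a ∈ S

def CAF (σ : Semantics) : Set AF := {F | AFCompact σ F}

def ArgS (𝕊 : Set (Set ℕ)) : Set ℕ := ⋃₀ 𝕊

def PairsS (𝕊 : Set (Set ℕ)) : Set (ℕ × ℕ) :=
  {p | ∃ S ∈ 𝕊, p.1 ∈ S ∧ p.2 ∈ S}

def IsExtensionSet (𝕊 : Set (Set ℕ)) : Prop := (ArgS 𝕊).Finite

def AFStep (F : AF) (a b : ℕ) : Prop := (a, b) ∈ F.R ∨ (b, a) ∈ F.R

def AFConnected (F : AF) : Prop :=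
  ∀ a ∈ F.A, ∀ b ∈ F.A, Relation.ReflTransGen (AFStep F) a b

def sameComp (F : AF) (a b : ℕ) : Prop := Relation.ReflTransGen (AFStep F) a b

def comps (F : AF) : Set (Set ℕ) :=
  {K | ∃ a ∈ F.A, K = {b ∈ (↑F.A : Set ℕ) | sameComp F a b}}

def nopairs (𝕊 : Set (Set ℕ)) (a b : ℕ) : Prop :=
  a ∈ ArgS 𝕊 ∧ b ∈ ArgS 𝕊 ∧ (a, b) ∉ PairsS 𝕊

def compsS (𝕊 : Set (Set ℕ)) : Set (Set ℕ) :=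
  {K | ∃ a ∈ ArgS 𝕊, K = {b ∈ ArgS 𝕊 | Relation.ReflTransGen (nopairs 𝕊) a b}}

noncomputable def sigmaMax (σ : Semantics) (n : ℕ) : ℕ :=
  sSup {k | ∃ F : AF, F.A.card = n ∧ (σ F).ncard = k}

noncomputable def sigmaMaxCon (σ : Semantics) (n : ℕ) : ℕ :=
  sSup {k | ∃ F : AF, F.A.card = n ∧ AFConnected F ∧ (σ F).ncard = k}

noncomputable def sigmaMax2 (σ : Semantics) (n : ℕ) : ℕ :=
  sSup ({k | ∃ F : AF, F.A.card = n ∧ (σ F).ncard = k} \ {sigmaMax σ n})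

def cfSet (𝕊 : Set (Set ℕ)) : Set (Set ℕ) :=
  {S | S ⊆ ArgS 𝕊 ∧ ∀ a ∈ S, ∀ b ∈ S, (a, b) ∈ PairsS 𝕊}

def plusSet (𝕊 : Set (Set ℕ)) : Set (Set ℕ) :=
  {S | S ∈ cfSet 𝕊 ∧ ∀ T ∈ cfSet 𝕊, S ⊆ T → S = T}

def minusSet (𝕊 : Set (Set ℕ)) : Set (Set ℕ) := plusSet 𝕊 \ 𝕊

def Sig (σ : Semantics) : Set (Set (Set ℕ)) := {𝕊 | ∃ F : AF, σ F = 𝕊}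

def cSig (σ : Semantics) : Set (Set (Set ℕ)) :=
  {𝕊 | ∃ F : AF, AFCompact σ F ∧ σ F = 𝕊}

def Pcon (σ : Semantics) (n : ℕ) : Set ℕ :=
  {k | ∃ F : AF, AFCompact σ F ∧ AFConnected F ∧ F.A.card = n ∧ (σ F).ncard = k}

open Classical in
noncomputable def restrictAF (F : AF) (K : Set ℕ) : AF where
  A := F.A.filter (fun a => a ∈ K)
  R := {p | p ∈ F.R ∧ p.1 ∈ K ∧ p.2 ∈ K}
  R_sub := fun p hp => by
    have h := F.R_sub p hp.1
    simp only [Finset.mem_filter]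
    exact ⟨⟨h.1, hp.2.1⟩, ⟨h.2, hp.2.2⟩⟩

def IsExclusionMapping (𝕊 : Set (Set ℕ)) (Rm : Set (ℕ × ℕ)) : Prop :=
  ∃ f : Set ℕ → ℕ,
    (∀ S ∈ minusSet 𝕊, f S ∈ ArgS 𝕊 ∧ f S ∉ S) ∧
    Rm = {p | ∃ S ∈ minusSet 𝕊, p.1 ∈ S ∧ p.2 = f S ∧ p ∉ PairsS 𝕊}

def Independent (𝕊 : Set (Set ℕ)) : Prop :=
  ∃ Rm : Set (ℕ × ℕ), IsExclusionMapping 𝕊 Rm ∧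
    (∀ a b, (a, b) ∈ Rm → (b, a) ∈ Rm → a = b) ∧
    ∀ S ∈ 𝕊, ∀ a ∈ ArgS 𝕊 \ S, ∃ s ∈ S, (s, a) ∉ Rm ∪ PairsS 𝕊

def ConflictExplicit (σ : Semantics) (F : AF) : Prop :=
  ∀ a ∈ F.A, ∀ b ∈ F.A, (a, b) ∉ PairsS (σ F) → (a, b) ∈ F.R ∨ (b, a) ∈ F.R

noncomputable def canonicalCF (𝕊 : Set (Set ℕ)) (h : IsExtensionSet 𝕊) : AF where
  A := h.toFinset
  R := {p | p.1 ∈ ArgS 𝕊 ∧ p.2 ∈ ArgS 𝕊 ∧ p ∉ PairsS 𝕊}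
  R_sub := fun p hp => by
    exact ⟨(Set.Finite.mem_toFinset (hs := h)).2 hp.1, (Set.Finite.mem_toFinset (hs := h)).2 hp.2.1⟩

/-!
Naive, stable and stage extensions are conflict-free, so every set in `cfSet (σ F)` is
conflict-free in `F`. Stable and stage extensions cannot be enlarged to a conflict-free set
(a larger one would contain an argument they attack: stable extensions attack everything outside
them, and a larger set has the same range as a stage extension), hence they lie in
`plusSet (σ F)`. For naive semantics `cfSet (naive F)` is all of `cf F`, because two compatible
arguments extend to a naive extension, so `plusSet (naive F) = naive F`.

Conversely, the framework `canonicalCF 𝕊` in which two arguments conflict iff they never occur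
together in `𝕊` has exactly `cfSet 𝕊` as conflict-free sets, so its naive extensions are
`plusSet 𝕊`. To remove each `S ∈ plusSet 𝕊 \ 𝕊` from its stable extensions, add a fresh
self-attacking argument attacked by exactly `ArgS 𝕊 \ S`. Then the stable extensions are
exactly `𝕊`, and once they exist, stage extensions coincide with them.
-/

open Set

namespace AF

variable {F : AF} {S T : Set ℕ}

lemma cf_finite (F : AF) : F.cf.Finite :=
  F.A.finite_toSet.finite_subsets.subset fun _ hS => hS.1

lemma empty_mem_cf (F : AF) : ∅ ∈ F.cf :=
  ⟨empty_subset _, by simp⟩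

lemma mem_cf_of_subset (hT : T ∈ F.cf) (hST : S ⊆ T) : S ∈ F.cf :=
  ⟨hST.trans hT.1, fun a ha b hb => hT.2 a (hST ha) b (hST hb)⟩

lemma naive_subset_cf (F : AF) : F.naive ⊆ F.cf := fun _ hS => hS.1

lemma stb_subset_cf (F : AF) : F.stb ⊆ F.cf := fun _ hS => hS.1

lemma stage_subset_cf (F : AF) : F.stage ⊆ F.cf := fun _ hS => hS.1

lemma exists_naive_superset (hS : S ∈ F.cf) : ∃ T ∈ F.naive, S ⊆ T := by
  obtain ⟨T, ⟨hT, hST⟩, hmax⟩ := Finite.exists_maximalFor id {T | T ∈ F.cf ∧ S ⊆ T}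
    (F.cf_finite.subset fun _ hT => hT.1) ⟨S, hS, subset_rfl⟩
  exact ⟨T, ⟨hT, fun U hU hTU => hTU.antisymm (hmax ⟨hU, hST.trans hTU⟩ hTU)⟩, hST⟩

lemma naive_nonempty (F : AF) : F.naive.Nonempty :=
  let ⟨T, hT, _⟩ := exists_naive_superset F.empty_mem_cf
  ⟨T, hT⟩

lemma rng_mono (h : S ⊆ T) : F.rng S ⊆ F.rng T := by
  rintro b (hb | ⟨s, hs, hR⟩)
  · exact Or.inl (h hb)
  · exact Or.inr ⟨s, h hs, hR⟩

lemma rng_subset (hS : S ⊆ F.A) : F.rng S ⊆ F.A := by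
  rintro b (hb | ⟨s, _, hR⟩)
  · exact hS hb
  · exact (F.R_sub _ hR).2

lemma mem_stb_iff_rng_eq : S ∈ F.stb ↔ S ∈ F.cf ∧ F.rng S = F.A := by
  refine ⟨fun hS => ⟨hS.1, (rng_subset hS.1.1).antisymm fun a ha => ?_⟩,
    fun ⟨hS, hrng⟩ => ⟨hS, fun a ha haS => ?_⟩⟩
  · by_cases haS : a ∈ S
    · exact Or.inl haS
    · exact Or.inr (hS.2 a ha haS)
  · obtain haS' | hatt := (hrng.symm ▸ ha : a ∈ F.rng S)
    · exact absurd haS' haS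
    · exact hatt

lemma stage_nonempty (F : AF) : F.stage.Nonempty := by
  obtain ⟨S, hS, hmax⟩ := Finite.exists_maximalFor F.rng F.cf F.cf_finite ⟨∅, F.empty_mem_cf⟩
  exact ⟨S, hS, fun ⟨T, hT, hST⟩ => hST.2 (hmax hT hST.1)⟩

-- A stable extension has the largest possible range `F.A`.
lemma stage_eq_stb (hne : F.stb.Nonempty) : F.stage = F.stb := by
  obtain ⟨E, hE⟩ := hne
  have hErng := (mem_stb_iff_rng_eq.1 hE).2
  ext S
  refine ⟨fun hS => mem_stb_iff_rng_eq.2 ⟨hS.1, ?_⟩, fun hS => ⟨hS.1, ?_⟩⟩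
  · by_contra hne
    exact hS.2 ⟨E, hE.1, hErng ▸ (rng_subset hS.1.1).ssubset_of_ne hne⟩
  · rintro ⟨T, hT, hST⟩
    exact hST.not_subset ((rng_subset hT.1).trans ((mem_stb_iff_rng_eq.1 hS).2 ▸ subset_rfl))

end AF

section ExtensionSet

variable {𝕊 : Set (Set ℕ)} {F : AF} {S : Set ℕ}

lemma mem_cfSet_of_mem (hS : S ∈ 𝕊) : S ∈ cfSet 𝕊 :=
  ⟨subset_sUnion_of_mem hS, fun _ ha _ hb => ⟨S, hS, ha, hb⟩⟩

lemma isExtensionSet_of_subset_cf (h : 𝕊 ⊆ F.cf) : IsExtensionSet 𝕊 :=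
  F.A.finite_toSet.subset (sUnion_subset fun _ hS => (h hS).1)

lemma cfSet_subset_cf (h : 𝕊 ⊆ F.cf) : cfSet 𝕊 ⊆ F.cf := by
  refine fun S hS => ⟨hS.1.trans (sUnion_subset fun _ hT => (h hT).1), fun a ha b hb => ?_⟩
  obtain ⟨T, hT, haT, hbT⟩ := hS.2 a ha b hb
  exact (h hT).2 a haT b hbT

lemma subset_plusSet_of_subset_cf (h : 𝕊 ⊆ F.cf)
    (hmax : ∀ S ∈ 𝕊, ∀ T ∈ F.cf, S ⊆ T → T ⊆ S) : 𝕊 ⊆ plusSet 𝕊 :=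
  fun S hS => ⟨mem_cfSet_of_mem hS,
    fun T hT hST => hST.antisymm (hmax S hS T (cfSet_subset_cf h hT) hST)⟩

lemma mem_plusSet_iff : S ∈ plusSet 𝕊 ↔
    S ∈ cfSet 𝕊 ∧ ∀ a ∈ ArgS 𝕊, a ∉ S → ∃ s ∈ S, (s, a) ∉ PairsS 𝕊 := by
  refine ⟨fun hS => ⟨hS.1, fun a ha haS => ?_⟩, fun ⟨hS, hext⟩ => ⟨hS, fun T hT hST => ?_⟩⟩
  · by_contra! hpair
    have hins : insert a S ∈ cfSet 𝕊 := by
      refine ⟨insert_subset ha hS.1.1, ?_⟩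
      rintro x (rfl | hx) y (rfl | hy)
      · obtain ⟨U, hU, hxU⟩ := ha
        exact ⟨U, hU, hxU, hxU⟩
      · obtain ⟨U, hU, hyU, hxU⟩ := hpair y hy
        exact ⟨U, hU, hxU, hyU⟩
      · exact hpair x hx
      · exact hS.1.2 x hx y hy
    exact haS ((hS.2 _ hins (subset_insert a S)) ▸ mem_insert a S)
  · refine hST.antisymm fun x hx => ?_
    by_contra hxS
    obtain ⟨s, hs, hsx⟩ := hext x (hT.1 hx) hxS
    exact hsx (hT.2 s (hST hs) x hx)

lemma minusSet_finite (h : IsExtensionSet 𝕊) : (minusSet 𝕊).Finite :=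
  h.finite_subsets.subset fun _ hS => hS.1.1.1

end ExtensionSet

namespace AF

variable (F : AF)

lemma cfSet_naive : cfSet F.naive = F.cf := by
  refine (cfSet_subset_cf F.naive_subset_cf).antisymm fun S hS => ?_
  have hpair : ∀ a ∈ S, ∀ b ∈ S, (a, b) ∈ PairsS F.naive := by
    intro a ha b hb
    have hab : {a, b} ⊆ S := insert_subset ha (singleton_subset_iff.2 hb)
    obtain ⟨T, hT, habT⟩ := exists_naive_superset (mem_cf_of_subset hS hab)
    exact ⟨T, hT, habT (mem_insert a _), habT (mem_insert_of_mem a rfl)⟩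
  refine ⟨fun a ha => ?_, hpair⟩
  obtain ⟨T, hT, haT, -⟩ := hpair a ha a ha
  exact ⟨T, hT, haT⟩

lemma plusSet_naive : plusSet F.naive = F.naive := by
  simp only [plusSet, cfSet_naive]
  rfl

lemma stb_subset_plusSet : F.stb ⊆ plusSet F.stb := by
  refine subset_plusSet_of_subset_cf F.stb_subset_cf fun S hS T hT hST x hx => ?_
  by_contra hxS
  obtain ⟨s, hs, hsx⟩ := hS.2 x (hT.1 hx) hxS
  exact hT.2 s (hST hs) x hx hsx

lemma stage_subset_plusSet : F.stage ⊆ plusSet F.stage := by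
  refine subset_plusSet_of_subset_cf F.stage_subset_cf fun S hS T hT hST x hx => ?_
  have hrng : F.rng T = F.rng S :=
    not_not.1 fun hne => hS.2 ⟨T, hT, (rng_mono hST).ssubset_of_ne (Ne.symm hne)⟩
  obtain hxS | ⟨s, hs, hsx⟩ := (hrng ▸ Or.inl hx : x ∈ F.rng S)
  · exact hxS
  · exact absurd hsx (hT.2 s (hST hs) x hx)

end AF

lemma cf_canonicalCF (𝕊 : Set (Set ℕ)) (h : IsExtensionSet 𝕊) :
    (canonicalCF 𝕊 h).cf = cfSet 𝕊 := by
  ext S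
  have hA : (↑(canonicalCF 𝕊 h).A : Set ℕ) = ArgS 𝕊 := h.coe_toFinset
  refine ⟨fun ⟨hsub, hS⟩ => ⟨hA ▸ hsub, fun a ha b hb => ?_⟩,
    fun ⟨hsub, hS⟩ => ⟨hA ▸ hsub, fun a ha b hb hab => hab.2.2 (hS a ha b hb)⟩⟩
  by_contra hab
  exact hS a ha b hb ⟨(hA ▸ hsub) ha, (hA ▸ hsub) hb, hab⟩

lemma naive_canonicalCF (𝕊 : Set (Set ℕ)) (h : IsExtensionSet 𝕊) :
    (canonicalCF 𝕊 h).naive = plusSet 𝕊 := by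
  simp only [AF.naive, plusSet, cf_canonicalCF]

noncomputable def canonicalStb (𝕊 : Set (Set ℕ)) (h : IsExtensionSet 𝕊) (g : Set ℕ → ℕ) : AF where
  A := h.toFinset ∪ (minusSet_finite h).toFinset.image g
  R := {p | p.1 ∈ ArgS 𝕊 ∧ p.2 ∈ ArgS 𝕊 ∧ p ∉ PairsS 𝕊} ∪
    {p | ∃ S ∈ minusSet 𝕊, p.2 = g S ∧ (p.1 = g S ∨ p.1 ∈ ArgS 𝕊 \ S)}
  R_sub := by
    have hg : ∀ S ∈ minusSet 𝕊, g S ∈ h.toFinset ∪ (minusSet_finite h).toFinset.image g :=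
      fun S hS => Finset.mem_union_right _
        (Finset.mem_image_of_mem g ((minusSet_finite h).mem_toFinset.2 hS))
    have harg : ∀ a ∈ ArgS 𝕊, a ∈ h.toFinset ∪ (minusSet_finite h).toFinset.image g :=
      fun a ha => Finset.mem_union_left _ (h.mem_toFinset.2 ha)
    rintro ⟨a, b⟩ (⟨ha, hb, -⟩ | ⟨S, hS, rfl, rfl | ⟨ha, -⟩⟩)
    · exact ⟨harg a ha, harg b hb⟩
    · exact ⟨hg S hS, hg S hS⟩
    · exact ⟨harg a ha, hg S hS⟩

section Stable

variable {𝕊 : Set (Set ℕ)} {h : IsExtensionSet 𝕊} {g : Set ℕ → ℕ}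

lemma mem_canonicalStb_A {a : ℕ} :
    a ∈ (canonicalStb 𝕊 h g).A ↔ a ∈ ArgS 𝕊 ∨ ∃ S ∈ minusSet 𝕊, g S = a := by
  simp [canonicalStb, Finite.mem_toFinset (hs := h)]

lemma canonicalStb_attacks_arg_iff (hfresh : MapsTo g (minusSet 𝕊) (ArgS 𝕊)ᶜ) {s a : ℕ}
    (ha : a ∈ ArgS 𝕊) :
    (s, a) ∈ (canonicalStb 𝕊 h g).R ↔ s ∈ ArgS 𝕊 ∧ (s, a) ∉ PairsS 𝕊 := by
  constructor
  · rintro (⟨hs, -, hsa⟩ | ⟨S, hS, rfl, -⟩)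
    · exact ⟨hs, hsa⟩
    · exact absurd ha (hfresh hS)
  · rintro ⟨hs, hsa⟩
    exact Or.inl ⟨hs, ha, hsa⟩

lemma canonicalStb_attacks_fresh_iff (hfresh : MapsTo g (minusSet 𝕊) (ArgS 𝕊)ᶜ)
    (hinj : InjOn g (minusSet 𝕊)) {s : ℕ} {S : Set ℕ}
    (hS : S ∈ minusSet 𝕊) (hs : s ∈ ArgS 𝕊) :
    (s, g S) ∈ (canonicalStb 𝕊 h g).R ↔ s ∉ S := by
  constructor
  · rintro (⟨-, hg, -⟩ | ⟨S', hS', hgS, hsg | ⟨-, hsS⟩⟩)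
    · exact absurd hg (hfresh hS)
    · exact absurd (hsg ▸ hs) (hfresh hS')
    · exact hinj hS hS' hgS ▸ hsS
  · intro hsS
    exact Or.inr ⟨S, hS, rfl, Or.inr ⟨hs, hsS⟩⟩

lemma cf_canonicalStb (hfresh : MapsTo g (minusSet 𝕊) (ArgS 𝕊)ᶜ) :
    (canonicalStb 𝕊 h g).cf = cfSet 𝕊 := by
  ext E
  constructor
  · rintro ⟨hsub, hE⟩
    have hArg : E ⊆ ArgS 𝕊 := by
      intro x hx
      obtain hx' | ⟨S, hS, rfl⟩ := mem_canonicalStb_A.1 (hsub hx)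
      · exact hx'
      · exact absurd (Or.inr ⟨S, hS, rfl, Or.inl rfl⟩) (hE _ hx _ hx)
    refine ⟨hArg, fun a ha b hb => ?_⟩
    by_contra hab
    exact hE a ha b hb ((canonicalStb_attacks_arg_iff hfresh (hArg hb)).2 ⟨hArg ha, hab⟩)
  · rintro ⟨hArg, hE⟩
    refine ⟨fun a ha => mem_canonicalStb_A.2 (Or.inl (hArg ha)), fun a ha b hb hab => ?_⟩
    exact ((canonicalStb_attacks_arg_iff hfresh (hArg hb)).1 hab).2 (hE a ha b hb)

lemma mem_stb_canonicalStb_iff (hfresh : MapsTo g (minusSet 𝕊) (ArgS 𝕊)ᶜ)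
    (hinj : InjOn g (minusSet 𝕊)) {E : Set ℕ} :
    E ∈ (canonicalStb 𝕊 h g).stb ↔ E ∈ plusSet 𝕊 ∧ ∀ S ∈ minusSet 𝕊, ¬ E ⊆ S := by
  change E ∈ AF.cf _ ∧ _ ↔ _
  rw [cf_canonicalStb hfresh, mem_plusSet_iff, and_assoc]
  refine and_congr_right fun hE => ⟨fun hatt => ⟨fun a ha haE => ?_, fun S hS hES => ?_⟩, ?_⟩
  · obtain ⟨s, hs, hsa⟩ := hatt a (mem_canonicalStb_A.2 (Or.inl ha)) haE
    exact ⟨s, hs, ((canonicalStb_attacks_arg_iff hfresh ha).1 hsa).2⟩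
  · obtain ⟨s, hs, hsg⟩ :=
      hatt (g S) (mem_canonicalStb_A.2 (Or.inr ⟨S, hS, rfl⟩)) fun hg => hfresh hS (hE.1 hg)
    exact (canonicalStb_attacks_fresh_iff hfresh hinj hS (hE.1 hs)).1 hsg (hES hs)
  · rintro ⟨hext, hminus⟩ a ha haE
    obtain ha | ⟨S, hS, rfl⟩ := mem_canonicalStb_A.1 ha
    · obtain ⟨s, hs, hsa⟩ := hext a ha haE
      exact ⟨s, hs, (canonicalStb_attacks_arg_iff hfresh ha).2 ⟨hE.1 hs, hsa⟩⟩
    · obtain ⟨s, hs, hsS⟩ := not_subset.1 (hminus S hS)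
      exact ⟨s, hs, (canonicalStb_attacks_fresh_iff hfresh hinj hS (hE.1 hs)).2 hsS⟩

lemma stb_canonicalStb (hfresh : MapsTo g (minusSet 𝕊) (ArgS 𝕊)ᶜ)
    (hinj : InjOn g (minusSet 𝕊)) :
    (canonicalStb 𝕊 h g).stb = plusSet 𝕊 ∩ 𝕊 := by
  ext E
  rw [mem_stb_canonicalStb_iff hfresh hinj]
  constructor
  · rintro ⟨hE, hnot⟩
    exact ⟨hE, by_contra fun hE𝕊 => hnot E ⟨hE, hE𝕊⟩ subset_rfl⟩
  · rintro ⟨hE, hE𝕊⟩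
    exact ⟨hE, fun S hS hES => hS.2 (hE.2 S hS.1.1 hES ▸ hE𝕊)⟩

end Stable

lemma exists_injOn_minusSet_fresh {𝕊 : Set (Set ℕ)} (h : IsExtensionSet 𝕊) :
    ∃ g : Set ℕ → ℕ, MapsTo g (minusSet 𝕊) (ArgS 𝕊)ᶜ ∧ InjOn g (minusSet 𝕊) :=
  (minusSet_finite h).exists_injOn_of_encard_le (by rw [h.infinite_compl.encard_eq]; exact le_top)

lemma exists_stb_eq {𝕊 : Set (Set ℕ)} (h : IsExtensionSet 𝕊) (hsub : 𝕊 ⊆ plusSet 𝕊) :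
    ∃ F : AF, F.stb = 𝕊 := by
  obtain ⟨g, hfresh, hinj⟩ := exists_injOn_minusSet_fresh h
  exact ⟨canonicalStb 𝕊 h g, by rw [stb_canonicalStb hfresh hinj, inter_eq_right.2 hsub]⟩

theorem signature_characterizations :
    Sig AF.naive = {𝕊 | IsExtensionSet 𝕊 ∧ 𝕊 ≠ ∅ ∧ 𝕊 = plusSet 𝕊} ∧
    Sig AF.stb = {𝕊 | IsExtensionSet 𝕊 ∧ 𝕊 ⊆ plusSet 𝕊} ∧
    Sig AF.stage = {𝕊 | IsExtensionSet 𝕊 ∧ 𝕊 ≠ ∅ ∧ 𝕊 ⊆ plusSet 𝕊} := by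
  refine ⟨ext fun 𝕊 => ⟨?_, ?_⟩, ext fun 𝕊 => ⟨?_, ?_⟩, ext fun 𝕊 => ⟨?_, ?_⟩⟩
  · rintro ⟨F, rfl⟩
    exact ⟨isExtensionSet_of_subset_cf F.naive_subset_cf, F.naive_nonempty.ne_empty,
      F.plusSet_naive.symm⟩
  · rintro ⟨h, -, heq⟩
    exact ⟨canonicalCF 𝕊 h, by rw [naive_canonicalCF, ← heq]⟩
  · rintro ⟨F, rfl⟩
    exact ⟨isExtensionSet_of_subset_cf F.stb_subset_cf, F.stb_subset_plusSet⟩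
  · rintro ⟨h, hsub⟩
    exact exists_stb_eq h hsub
  · rintro ⟨F, rfl⟩
    exact ⟨isExtensionSet_of_subset_cf F.stage_subset_cf, F.stage_nonempty.ne_empty,
      F.stage_subset_plusSet⟩
  · rintro ⟨h, hne, hsub⟩
    obtain ⟨F, hF⟩ := exists_stb_eq h hsub
    exact ⟨F, by rw [F.stage_eq_stb (hF ▸ nonempty_iff_ne_empty.2 hne), hF]⟩
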